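/- Let γ_b ~ Gamma(shape m, mean γ̄_b) and γ_e ~ Exponential(mean γ̄_e) be independent, τ > 1. Then as γ̄_b → ∞, SOP ~ e^{(τ−1)/(τγ̄_e)} (τ m γ̄_e/γ̄_b)^m Γ̃(m+1, (τ−1)/(τγ̄_e)), so the SOP decays as γ̄_b^{−m} (secrecy diversity order m). -/

import Mathlib

/-!
On `[0, z]` the integrand `t ^ (s - 1) * exp (-t)` lies between `exp (-z) * t ^ (s - 1)` and
`t ^ (s - 1)`, so `exp (-z) * z ^ s / Γ(s + 1) ≤ γ̃(s, z) ≤ z ^ s / Γ(s + 1)`. Hence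
`g ^ m * γ̃(m, u / g) → u ^ m / Γ(m + 1)` as `g → ∞`, dominated by its limit, and dominated
convergence gives `g ^ m * SOP(g) → E[u(γ_e) ^ m] / Γ(m + 1)` with `u(x) = m (τ x + τ - 1)`.
Writing `u(x) = τ m γ̄_e (x / γ̄_e + c)` with `c = (τ - 1) / (τ γ̄_e)` and substituting
`t = x / γ̄_e + c` turns this expectation into `(τ m γ̄_e) ^ m e ^ c Γ(m + 1, c)`.
-/

open MeasureTheory Real Set Filter

/-- Regularized lower incomplete gamma function `γ̃(s, x) = γ(s,x)/Γ(s)`. -/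
noncomputable def regLowerIncGamma (s x : ℝ) : ℝ :=
  (∫ t in (0)..x, t ^ (s - 1) * Real.exp (-t)) / Real.Gamma s

/-- Regularized upper incomplete gamma function `Γ̃(s, x) = Γ(s,x)/Γ(s)`. -/
noncomputable def regUpperIncGamma (s x : ℝ) : ℝ :=
  (∫ t in Ioi x, t ^ (s - 1) * Real.exp (-t)) / Real.Gamma s

open Topology

section LowerIncGamma

variable {s z : ℝ}

lemma intervalIntegrable_rpow_sub_one_mul_exp_neg (hs : 0 < s) (a b : ℝ) :
    IntervalIntegrable (fun t => t ^ (s - 1) * exp (-t)) volume a b :=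
  (intervalIntegral.intervalIntegrable_rpow' (by linarith)).mul_continuousOn
    (continuous_exp.comp continuous_neg).continuousOn

lemma continuous_regLowerIncGamma (hs : 0 < s) : Continuous (regLowerIncGamma s) :=
  (intervalIntegral.continuous_primitive
    (intervalIntegrable_rpow_sub_one_mul_exp_neg hs) 0).div_const _

lemma integral_rpow_sub_one (hs : 0 < s) (z : ℝ) :
    ∫ t in (0 : ℝ)..z, t ^ (s - 1) = z ^ s / s := by
  rw [integral_rpow (Or.inl (by linarith)), sub_add_cancel, zero_rpow hs.ne', sub_zero]

lemma regLowerIncGamma_nonneg (hs : 0 < s) (hz : 0 ≤ z) : 0 ≤ regLowerIncGamma s z :=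
  div_nonneg (intervalIntegral.integral_nonneg hz fun t ht => by have := ht.1; positivity)
    (Gamma_pos_of_pos hs).le

lemma regLowerIncGamma_le (hs : 0 < s) (hz : 0 ≤ z) :
    regLowerIncGamma s z ≤ z ^ s / Gamma (s + 1) := by
  have hbound :
      ∫ t in (0 : ℝ)..z, t ^ (s - 1) * exp (-t) ≤ ∫ t in (0 : ℝ)..z, t ^ (s - 1) :=
    intervalIntegral.integral_mono_on hz (intervalIntegrable_rpow_sub_one_mul_exp_neg hs 0 z)
      (intervalIntegral.intervalIntegrable_rpow' (by linarith)) fun t ht =>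
        mul_le_of_le_one_right (rpow_nonneg ht.1 _) (exp_le_one_iff.mpr (by linarith [ht.1]))
  rw [regLowerIncGamma, Gamma_add_one hs.ne', ← div_div]
  gcongr
  rwa [integral_rpow_sub_one hs] at hbound

lemma exp_neg_mul_le_regLowerIncGamma (hs : 0 < s) (hz : 0 ≤ z) :
    exp (-z) * (z ^ s / Gamma (s + 1)) ≤ regLowerIncGamma s z := by
  have hbound : ∫ t in (0 : ℝ)..z, exp (-z) * t ^ (s - 1) ≤
      ∫ t in (0 : ℝ)..z, t ^ (s - 1) * exp (-t) :=
    intervalIntegral.integral_mono_on hz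
      ((intervalIntegral.intervalIntegrable_rpow' (by linarith)).const_mul _)
      (intervalIntegrable_rpow_sub_one_mul_exp_neg hs 0 z) fun t ht => by
        rw [mul_comm]
        exact mul_le_mul_of_nonneg_left (exp_le_exp.mpr (by linarith [ht.2])) (rpow_nonneg ht.1 _)
  rw [intervalIntegral.integral_const_mul, integral_rpow_sub_one hs] at hbound
  rw [regLowerIncGamma, Gamma_add_one hs.ne', ← div_div, ← mul_div_assoc]
  gcongr

lemma rpow_mul_div_rpow {y g : ℝ} (hy : 0 ≤ y) (hg : 0 < g) : g ^ s * (y / g) ^ s = y ^ s := by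
  rw [div_rpow hy hg.le, mul_div_cancel₀ _ (rpow_pos_of_pos hg s).ne']

lemma rpow_mul_regLowerIncGamma_div_le {y g : ℝ} (hs : 0 < s) (hy : 0 ≤ y) (hg : 0 < g) :
    g ^ s * regLowerIncGamma s (y / g) ≤ y ^ s / Gamma (s + 1) := by
  calc g ^ s * regLowerIncGamma s (y / g) ≤ g ^ s * ((y / g) ^ s / Gamma (s + 1)) := by
        gcongr
        exact regLowerIncGamma_le hs (by positivity)
    _ = y ^ s / Gamma (s + 1) := by rw [← mul_div_assoc, rpow_mul_div_rpow hy hg]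

lemma tendsto_rpow_mul_regLowerIncGamma_div {y : ℝ} (hs : 0 < s) (hy : 0 ≤ y) :
    Tendsto (fun g => g ^ s * regLowerIncGamma s (y / g)) atTop
      (𝓝 (y ^ s / Gamma (s + 1))) := by
  have hexp : Tendsto (fun g : ℝ => exp (-(y / g)) * (y ^ s / Gamma (s + 1))) atTop
      (𝓝 (y ^ s / Gamma (s + 1))) := by
    have hzero : Tendsto (fun g : ℝ => -(y / g)) atTop (𝓝 0) := by
      simpa using (tendsto_const_nhds (x := y)).div_atTop tendsto_id |>.neg
    simpa using ((continuous_exp.tendsto 0).comp hzero).mul_const (y ^ s / Gamma (s + 1))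
  refine tendsto_of_tendsto_of_tendsto_of_le_of_le' hexp tendsto_const_nhds ?_ ?_
  · filter_upwards [eventually_gt_atTop 0] with g hg
    calc exp (-(y / g)) * (y ^ s / Gamma (s + 1))
        = g ^ s * (exp (-(y / g)) * ((y / g) ^ s / Gamma (s + 1))) := by
          rw [← rpow_mul_div_rpow hy hg]; ring
      _ ≤ g ^ s * regLowerIncGamma s (y / g) := by
          gcongr
          exact exp_neg_mul_le_regLowerIncGamma hs (by positivity)
  · filter_upwards [eventually_gt_atTop 0] with g hg
    exact rpow_mul_regLowerIncGamma_div_le hs hy hg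

end LowerIncGamma

theorem tendsto_rpow_mul_integral_regLowerIncGamma_div {α : Type*} [MeasurableSpace α]
    {μ : Measure α} {s : ℝ} (hs : 0 < s) {u w : α → ℝ} (hu : AEStronglyMeasurable u μ)
    (hw : AEStronglyMeasurable w μ) (hu_nonneg : ∀ᵐ x ∂μ, 0 ≤ u x)
    (hint : Integrable (fun x => u x ^ s * w x) μ) :
    Tendsto (fun g => g ^ s * ∫ x, regLowerIncGamma s (u x / g) * w x ∂μ) atTop
      (𝓝 ((∫ x, u x ^ s * w x ∂μ) / Gamma (s + 1))) := by
  simp_rw [← integral_const_mul, ← integral_div]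
  refine tendsto_integral_filter_of_dominated_convergence
    (fun x => ‖u x ^ s * w x‖ / Gamma (s + 1))
    (Eventually.of_forall fun g => (((continuous_regLowerIncGamma hs).comp
      (continuous_id.div_const g)).comp_aestronglyMeasurable hu).mul hw |>.const_mul _)
    ?_ (hint.norm.div_const _) ?_
  · filter_upwards [eventually_gt_atTop 0] with g hg
    filter_upwards [hu_nonneg] with x hx
    rw [← mul_assoc, norm_mul, norm_mul (u x ^ s), norm_of_nonneg (rpow_nonneg hx s),
      norm_of_nonneg (mul_nonneg (rpow_nonneg hg.le s)
        (regLowerIncGamma_nonneg hs (div_nonneg hx hg.le))), ← div_mul_eq_mul_div]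
    gcongr
    exact rpow_mul_regLowerIncGamma_div_le hs hx hg
  · filter_upwards [hu_nonneg] with x hx
    simpa only [mul_assoc, div_mul_eq_mul_div] using
      (tendsto_rpow_mul_regLowerIncGamma_div hs hx).mul_const (w x)

section ChangeOfVariables

lemma integral_Ioi_comp_add_right {E : Type*} [NormedAddCommGroup E] [NormedSpace ℝ E]
    (f : ℝ → E) (a c : ℝ) : ∫ x in Ioi a, f (x + c) = ∫ x in Ioi (a + c), f x := by
  simpa using (measurePreserving_add_right volume c).setIntegral_preimage_emb
    (measurableEmbedding_addRight c) f (Ioi (a + c))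

lemma integrableOn_Ioi_comp_add_right_iff {E : Type*} [NormedAddCommGroup E] (f : ℝ → E)
    (a c : ℝ) : IntegrableOn (fun x => f (x + c)) (Ioi a) ↔ IntegrableOn f (Ioi (a + c)) := by
  simpa [Function.comp_def] using
    (measurePreserving_add_right volume c).integrableOn_comp_preimage
      (measurableEmbedding_addRight c) (f := f) (s := Ioi (a + c))

variable {σ : ℝ}

lemma comp_div_add_mul_exp_neg_div (f : ℝ → ℝ) (hσ : 0 < σ) (c x : ℝ) :
    f (x / σ + c) * (1 / σ * exp (-x / σ)) =
      exp c / σ * (fun t => f t * exp (-t)) (σ⁻¹ * x + c) := by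
  have : exp (-x / σ) = exp c * exp (-(σ⁻¹ * x + c)) := by
    rw [← exp_add]; congr 1; field_simp; ring
  rw [this, inv_mul_eq_div]; ring

lemma integral_Ioi_comp_div_add_mul_exp_neg (f : ℝ → ℝ) (hσ : 0 < σ) (c : ℝ) :
    ∫ x in Ioi 0, f (x / σ + c) * (1 / σ * exp (-x / σ)) =
      exp c * ∫ t in Ioi c, f t * exp (-t) := by
  simp_rw [comp_div_add_mul_exp_neg_div f hσ c, integral_const_mul]
  rw [integral_comp_mul_left_Ioi (fun y => f (y + c) * exp (-(y + c))) 0 (inv_pos.mpr hσ),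
    mul_zero, integral_Ioi_comp_add_right (fun t => f t * exp (-t)), zero_add, smul_eq_mul,
    inv_inv]
  field_simp

lemma integrableOn_Ioi_comp_div_add_mul_exp_neg (f : ℝ → ℝ) (hσ : 0 < σ) {c : ℝ}
    (hf : IntegrableOn (fun t => f t * exp (-t)) (Ioi c)) :
    IntegrableOn (fun x => f (x / σ + c) * (1 / σ * exp (-x / σ))) (Ioi 0) := by
  simp_rw [comp_div_add_mul_exp_neg_div f hσ c]
  have hcomp : IntegrableOn (fun x => f (σ⁻¹ * x + c) * exp (-(σ⁻¹ * x + c))) (Ioi 0) := by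
    rw [integrableOn_Ioi_comp_mul_left_iff (fun y => f (y + c) * exp (-(y + c))) 0
      (inv_pos.mpr hσ), mul_zero, integrableOn_Ioi_comp_add_right_iff (fun t => f t * exp (-t)),
      zero_add]
    exact hf
  exact hcomp.const_mul _

end ChangeOfVariables

lemma integrableOn_rpow_mul_exp_neg_Ioi {s c : ℝ} (hs : -1 < s) (hc : 0 ≤ c) :
    IntegrableOn (fun t => t ^ s * exp (-t)) (Ioi c) := by
  simpa using (integrableOn_rpow_mul_exp_neg_rpow hs one_pos).mono_set (Ioi_subset_Ioi hc)

lemma regUpperIncGamma_pos {s x : ℝ} (hs : 0 < s) (hx : 0 ≤ x) : 0 < regUpperIncGamma s x := by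
  refine div_pos ?_ (Gamma_pos_of_pos hs)
  have hint := integrableOn_rpow_mul_exp_neg_Ioi (by linarith : -1 < s - 1) hx
  rw [setIntegral_pos_iff_support_of_nonneg_ae ?_ hint]
  · have hsupp : Function.support (fun t => t ^ (s - 1) * exp (-t)) ∩ Ioi x = Ioi x :=
      inter_eq_right.mpr fun t ht => (by have : 0 < t := hx.trans_lt ht; positivity : _ < _).ne'
    rw [hsupp, volume_Ioi]
    exact ENNReal.zero_lt_top
  · filter_upwards [ae_restrict_mem measurableSet_Ioi] with t ht
    have : 0 < t := hx.trans_lt ht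
    positivity

lemma integral_Ioi_mul_rpow_mul_exp_neg {s k c : ℝ} (hs : -1 < s) (hk : 0 ≤ k) (hc : 0 ≤ c) :
    ∫ t in Ioi c, (k * t) ^ s * exp (-t) =
      k ^ s * Gamma (s + 1) * regUpperIncGamma (s + 1) c := by
  rw [regUpperIncGamma, add_sub_cancel_right, mul_assoc,
    mul_div_cancel₀ _ (Gamma_pos_of_pos (by linarith)).ne', ← integral_const_mul]
  refine setIntegral_congr_fun measurableSet_Ioi fun t (ht : c < t) => ?_
  rw [mul_rpow hk (hc.trans ht.le), mul_assoc]

lemma integrableOn_Ioi_mul_rpow_mul_exp_neg {s k c : ℝ} (hs : -1 < s) (hk : 0 ≤ k)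
    (hc : 0 ≤ c) :
    IntegrableOn (fun t => (k * t) ^ s * exp (-t)) (Ioi c) := by
  refine IntegrableOn.congr_fun ((integrableOn_rpow_mul_exp_neg_Ioi hs hc).const_mul (k ^ s))
    (fun t (ht : c < t) => ?_) measurableSet_Ioi
  rw [mul_rpow hk (hc.trans ht.le), mul_assoc]

/-- Asymptotic SOP for a Nakagami-`m` (gamma) legitimate link and exponential
eavesdropper link: as `γ̄_b → ∞`,
`SOP ~ e^{(τ−1)/(τγ̄_e)} (τ m γ̄_e/γ̄_b)^m Γ̃(m+1, (τ−1)/(τγ̄_e))`, i.e. the SOP decays as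
`γ̄_b^{−m}` (secrecy diversity order `m`). -/
theorem sop_gamma_asymptotic
    (m gebar τ : ℝ) (hm : 0 < m) (hgebar : 0 < gebar) (hτ : 1 < τ)
    (P : ℝ → ℝ)
    (hP : P = fun g => ∫ x in Ioi (0 : ℝ),
      regLowerIncGamma m (m * (τ * x + τ - 1) / g) *
        ((1 / gebar) * Real.exp (-x / gebar)))
    (A : ℝ → ℝ)
    (hA : A = fun g => Real.exp ((τ - 1) / (τ * gebar)) * (τ * m * gebar / g) ^ m *
      regUpperIncGamma (m + 1) ((τ - 1) / (τ * gebar))) :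
    Tendsto (fun g => P g / A g) atTop (nhds 1) := by
  subst hA
  set c := (τ - 1) / (τ * gebar)
  set k := τ * m * gebar
  have hc : 0 ≤ c := div_nonneg (by linarith) (by positivity)
  have hk : 0 < k := by positivity
  have haffine : ∀ x, m * (τ * x + τ - 1) = k * (x / gebar + c) := fun x => by
    simp only [k, c]; field_simp; ring
  have hlim := tendsto_rpow_mul_integral_regLowerIncGamma_div hm (μ := volume.restrict (Ioi 0))
    (u := fun x => k * (x / gebar + c)) (w := fun x => 1 / gebar * exp (-x / gebar))
    (by fun_prop) (by fun_prop)
    (ae_restrict_of_forall_mem measurableSet_Ioi fun x (hx : 0 < x) => by positivity)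
    (integrableOn_Ioi_comp_div_add_mul_exp_neg (fun t => (k * t) ^ m) hgebar
      (integrableOn_Ioi_mul_rpow_mul_exp_neg (by linarith) hk.le hc))
  rw [integral_Ioi_comp_div_add_mul_exp_neg (fun t => (k * t) ^ m) hgebar,
    integral_Ioi_mul_rpow_mul_exp_neg (by linarith) hk.le hc] at hlim
  set L := exp c * k ^ m * regUpperIncGamma (m + 1) c
  have hL : 0 < L := by
    have := regUpperIncGamma_pos (by linarith : 0 < m + 1) hc
    positivity
  rw [show exp c * (k ^ m * Gamma (m + 1) * regUpperIncGamma (m + 1) c) / Gamma (m + 1) = L by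
    have := (Gamma_pos_of_pos (by linarith : 0 < m + 1)).ne'
    simp only [L]; field_simp] at hlim
  have hratio : Tendsto (fun g => g ^ m * P g / L) atTop (𝓝 1) := by
    simpa [hP, haffine, hL.ne'] using hlim.div_const L
  refine hratio.congr' ?_
  filter_upwards [eventually_gt_atTop 0] with g hg
  have hgm : g ^ m ≠ 0 := (rpow_pos_of_pos hg m).ne'
  rw [div_rpow hk.le hg.le,
    show exp c * (k ^ m / g ^ m) * regUpperIncGamma (m + 1) c = L / g ^ m by simp only [L]; ring]
  field_simp
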